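/- arXiv:1605.00381 — 6 statements merged into one kernel-verified Lean document; each statement's English description precedes it below -/
import Mathlib

section
/- The map σ'_X : 𝒫 X → [2^X, 2]_⋀ sending S to the function f ↦ ⋀_{x ∈ S} f(x) is a bijection between the powerset of X and the set of inf-preserving maps from the complete lattice (X → Prop) to Prop. -/
/-!
Every predicate `f : X → Prop` is the meet of the coatoms `(· ≠ x)` over the points where `f`
fails, so an inf-preserving `φ` is determined by its values on these coatoms. Reading off
`S := {x | ¬ φ (· ≠ x)}` inverts `σ'_X`.
-/

namespace PropPowerset

variable {X : Type*}

def forallMem (S : Set X) (f : X → Prop) : Prop := ∀ x ∈ S, f x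

theorem sInf_apply_iff (s : Set (X → Prop)) (x : X) : sInf s x ↔ ∀ f ∈ s, f x := by
  simp [sInf_apply, iInf_Prop_eq, Subtype.forall]

theorem sInf_image_iff {Y : Type*} (φ : Y → Prop) (s : Set Y) :
    sInf (φ '' s) ↔ ∀ y ∈ s, φ y := by
  simp [sInf_image, iInf_Prop_eq]

theorem forallMem_sInf (S : Set X) (s : Set (X → Prop)) :
    forallMem S (sInf s) = sInf (forallMem S '' s) := by
  simp only [forallMem, eq_iff_iff, sInf_apply_iff, sInf_image_iff]
  exact forall₂_comm

def support (φ : (X → Prop) → Prop) : Set X := {x | ¬ φ (· ≠ x)}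

theorem support_forallMem (S : Set X) : support (forallMem S) = S := by
  ext x
  simp [support, forallMem]

theorem eq_sInf_ne (f : X → Prop) : f = sInf ((fun x => (· ≠ x)) '' {x | ¬ f x}) := by
  ext y
  simp only [sInf_apply_iff, Set.forall_mem_image, Set.mem_ofPred_eq]
  exact ⟨fun hy x hx h => hx (h ▸ hy), fun h => by_contra fun hy => h hy rfl⟩

theorem forallMem_support {φ : (X → Prop) → Prop}
    (hφ : ∀ s : Set (X → Prop), φ (sInf s) = sInf (φ '' s)) :
    forallMem (support φ) = φ := by
  ext f
  conv_rhs => rw [eq_sInf_ne f, hφ, ← Set.image_comp, sInf_image_iff]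
  exact forall_congr' fun x => not_imp_comm

end PropPowerset

/-- The map `σ'_X : 𝒫 X → [2^X, 2]_⋀`, `S ↦ (f ↦ ∀ x ∈ S, f x)`, is a bijection
between the powerset of `X` and the inf-preserving maps `(X → Prop) → Prop`. -/
theorem stmt_3 {X : Type} :
    Set.BijOn (fun (S : Set X) => fun (f : X → Prop) => ∀ x ∈ S, f x)
      Set.univ
      {φ : (X → Prop) → Prop | ∀ s : Set (X → Prop), φ (sInf s) = sInf (φ '' s)} :=
  Set.InvOn.bijOn (f' := PropPowerset.support)
    ⟨fun S _ => PropPowerset.support_forallMem S,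
      fun _ hφ => PropPowerset.forallMem_support hφ⟩
    (fun S _ => PropPowerset.forallMem_sInf S) (Set.mapsTo_univ _ _)
end

section
/- Let C be a complete category, T a monad on C, and A an object of C. There is a bijective correspondence between T-algebra structures α̂ : T A → A on A and monad morphisms α : T → K_A, where K_A is the continuation-like monad X ↦ A^{C(X,A)} (the C(X,A)-fold power of A). The correspondence sends α̂ to the map α_X whose f-component (for f : X → A) is α̂ ∘ T f, and conversely sends α to π_{id_A} ∘ α_A : T A → A. -/
/-! The Yoneda lemma does all the work: a natural family `α X : T X ⟶ A^{C(X,A)}` is determined by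
the single morphism `α_A ≫ π_{𝟙 A} : T A ⟶ A`, since naturality gives `α_X ≫ π_f = T f ≫ α_A ≫ π_{𝟙 A}`.
Under this correspondence the unit and multiplication laws of a monad morphism into `K_A` are
exactly the two Eilenberg–Moore laws for `α_A ≫ π_{𝟙 A}`, transported along the naturality
squares of `η` and `μ`. -/

open CategoryTheory CategoryTheory.Limits

universe v u

/-- The continuation-like monad object `K_A X = A^{C(X,A)}`. -/
noncomputable abbrev contPow {C : Type u} [Category.{v} C] [HasLimits C]
    (A X : C) : C :=
  ∏ᶜ (fun (_ : X ⟶ A) => A)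

/-- `ah : T A ⟶ A` is an Eilenberg–Moore algebra structure. -/
def IsAlgebraStructure {C : Type u} [Category.{v} C] (T : Monad C) {A : C}
    (ah : T.obj A ⟶ A) : Prop :=
  T.η.app A ≫ ah = 𝟙 A ∧ T.μ.app A ≫ ah = T.map ah ≫ ah

/-- A family `α X : T X ⟶ A^{C(X,A)}` is a monad morphism into the
continuation-like monad `K_A`, expressed componentwise via the projections:
naturality, unit compatibility, and multiplication compatibility
(`π_f ∘ μ^{K_A} = π_{π_f}`). -/
noncomputable def IsMonadMapToCont {C : Type u} [Category.{v} C] [HasLimits C]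
    (T : Monad C) (A : C) (α : ∀ X : C, T.obj X ⟶ contPow A X) : Prop :=
  (∀ (X Y : C) (g : X ⟶ Y) (f : Y ⟶ A),
      T.map g ≫ α Y ≫ Pi.π (fun (_ : Y ⟶ A) => A) f
        = α X ≫ Pi.π (fun (_ : X ⟶ A) => A) (g ≫ f))
  ∧ (∀ (X : C) (f : X ⟶ A),
      T.η.app X ≫ α X ≫ Pi.π (fun (_ : X ⟶ A) => A) f = f)
  ∧ (∀ (X : C) (f : X ⟶ A),
      T.μ.app X ≫ α X ≫ Pi.π (fun (_ : X ⟶ A) => A) f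
        = T.map (α X) ≫ α (contPow A X)
            ≫ Pi.π (fun (_ : contPow A X ⟶ A) => A)
                (Pi.π (fun (_ : X ⟶ A) => A) f))

namespace CategoryTheory.Monad

variable {C : Type u} [Category.{v} C] [HasLimits C] (T : Monad C) {A : C}

theorem pi_lift_map_comp_π (ah : T.obj A ⟶ A) {X : C} (f : X ⟶ A) :
    Pi.lift (fun (f : X ⟶ A) => T.map f ≫ ah) ≫ Pi.π (fun (_ : X ⟶ A) => A) f = T.map f ≫ ah :=
  Pi.lift_π _ _

theorem isMonadMapToCont_of_isAlgebraStructure {ah : T.obj A ⟶ A}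
    (h : IsAlgebraStructure T ah) :
    IsMonadMapToCont T A (fun X => Pi.lift (fun (f : X ⟶ A) => T.map f ≫ ah)) := by
  obtain ⟨h_unit, h_mul⟩ := h
  refine ⟨fun X Y g f => ?_, fun X f => ?_, fun X f => ?_⟩
  · simp only [pi_lift_map_comp_π, Functor.map_comp, Category.assoc]
  · rw [pi_lift_map_comp_π, ← T.η.naturality_assoc f, Functor.id_map, h_unit]
    exact Category.comp_id f
  · rw [pi_lift_map_comp_π, pi_lift_map_comp_π, ← Functor.map_comp_assoc, pi_lift_map_comp_π,
      ← T.μ.naturality_assoc, h_mul, Functor.comp_map, Functor.map_comp_assoc]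

theorem eq_pi_lift_of_naturality {α : ∀ X : C, T.obj X ⟶ contPow A X}
    (hnat : ∀ (X Y : C) (g : X ⟶ Y) (f : Y ⟶ A),
      T.map g ≫ α Y ≫ Pi.π (fun (_ : Y ⟶ A) => A) f
        = α X ≫ Pi.π (fun (_ : X ⟶ A) => A) (g ≫ f)) (X : C) :
    α X = Pi.lift (fun (f : X ⟶ A) => T.map f ≫ α A ≫ Pi.π (fun (_ : A ⟶ A) => A) (𝟙 A)) :=
  Pi.hom_ext _ _ fun f => by rw [pi_lift_map_comp_π, hnat, Category.comp_id]

theorem isAlgebraStructure_of_isMonadMapToCont {α : ∀ X : C, T.obj X ⟶ contPow A X}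
    (h : IsMonadMapToCont T A α) :
    IsAlgebraStructure T (α A ≫ Pi.π (fun (_ : A ⟶ A) => A) (𝟙 A)) := by
  obtain ⟨h_nat, h_unit, h_mul⟩ := h
  refine ⟨h_unit A (𝟙 A), ?_⟩
  have h_proj := h_nat (contPow A A) A (Pi.π (fun (_ : A ⟶ A) => A) (𝟙 A)) (𝟙 A)
  rw [Category.comp_id] at h_proj
  rw [h_mul, Functor.map_comp, Category.assoc, h_proj]

end CategoryTheory.Monad

/-- For a complete category `C`, a monad `T` on `C` and an object `A`, the
assignments `ah ↦ (X ↦ ⟨T f ≫ ah⟩_{f : X ⟶ A})` and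
`α ↦ α_A ≫ π_{𝟙 A}` are mutually inverse bijections between `T`-algebra
structures on `A` and monad morphisms `T ⟶ K_A` into the continuation-like
monad `K_A X = A^{C(X,A)}`. -/
theorem stmt_5 {C : Type u} [Category.{v} C] [HasLimits C]
    (T : Monad C) (A : C) :
    (∀ ah : T.obj A ⟶ A, IsAlgebraStructure T ah →
        IsMonadMapToCont T A
          (fun X => Pi.lift (fun (f : X ⟶ A) => T.map f ≫ ah)))
    ∧ (∀ α : ∀ X : C, T.obj X ⟶ contPow A X, IsMonadMapToCont T A α →
        IsAlgebraStructure T (α A ≫ Pi.π (fun (_ : A ⟶ A) => A) (𝟙 A)))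
    ∧ (∀ ah : T.obj A ⟶ A, IsAlgebraStructure T ah →
        (fun X => Pi.lift (fun (f : X ⟶ A) => T.map f ≫ ah)) A
            ≫ Pi.π (fun (_ : A ⟶ A) => A) (𝟙 A) = ah)
    ∧ (∀ α : ∀ X : C, T.obj X ⟶ contPow A X, IsMonadMapToCont T A α →
        ∀ X : C, α X = Pi.lift (fun (f : X ⟶ A) =>
          T.map f ≫ α A ≫ Pi.π (fun (_ : A ⟶ A) => A) (𝟙 A))) :=
  ⟨fun _ h => T.isMonadMapToCont_of_isAlgebraStructure h,
    fun _ h => T.isAlgebraStructure_of_isMonadMapToCont h,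
    fun ah _ => by rw [T.pi_lift_map_comp_π, T.map_id, Category.id_comp],
    fun _ h => T.eq_pi_lift_of_naturality h.1⟩
end

section
/- Let 𝒟 be the finitely supported probability subdistribution monad on Set (D_{≤1} X = finitely supported p : X → [0,1] with ∑ p(x) ≤ 1). The map τ_total sending p ∈ D_{≤1} X to the function (f : X → [0,1]) ↦ ∑_{x} f(x)·p(x) is injective for every set X, and for every finite set Y it is a bijection from D_{≤1} Y onto the set of maps [0,1]^Y → [0,1] that preserve 0, partial sums (f ⊎ g defined when f + g ≤ 1 pointwise, with value f+g), and scalar multiplication by elements of [0,1]. -/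
/-!
Testing a subdistribution `p` against the point mass `δ_x` returns `p x`, which gives
injectivity. Conversely, for finite `Y` every `f ∈ [0,1]^Y` is the iterated partial sum
`⊎_y f(y)·δ_y`, all of whose stages stay in `[0,1]^Y`; so a morphism `φ` satisfies
`φ f = ∑_y f(y)·φ(δ_y)`, and taking `f = 1` shows `y ↦ φ(δ_y)` is a subdistribution.
-/

open Set

/-- A generalized-effect-module morphism `[0,1]^Y → [0,1]`: `φ` preserves `0`, the partial sum
`f ⊎ g` (defined when `f + g ≤ 1` pointwise) and scalars in `[0,1]`. -/
structure IsGEModHom {Y : Type*} (φ : (Y → ℝ) → ℝ) : Prop where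
  map_zero : φ 0 = 0
  map_add : ∀ f g : Y → ℝ, (∀ y, f y ∈ Icc (0:ℝ) 1) → (∀ y, g y ∈ Icc (0:ℝ) 1) →
    (∀ y, f y + g y ≤ 1) → φ (f + g) = φ f + φ g
  map_smul : ∀ (r : ℝ) (f : Y → ℝ), r ∈ Icc (0:ℝ) 1 → (∀ y, f y ∈ Icc (0:ℝ) 1) →
    φ (r • f) = r * φ f

section PointMass

variable {X : Type*} [DecidableEq X]

lemma single_one_mem_Icc (x x' : X) : (Pi.single x 1 : X → ℝ) x' ∈ Icc (0:ℝ) 1 := by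
  rcases eq_or_ne x' x with rfl | h <;> simp [*]

lemma finsum_single_one_mul (p : X → ℝ) (x : X) :
    ∑ᶠ x', (Pi.single x 1 : X → ℝ) x' * p x' = p x := by
  rw [finsum_eq_single _ x fun x' hx' => by simp [hx']]
  simp

lemma sum_single_one_mul [Fintype X] (p : X → ℝ) (x : X) :
    ∑ x', (Pi.single x 1 : X → ℝ) x' * p x' = p x := by
  rw [← finsum_eq_sum_of_fintype, finsum_single_one_mul]

lemma sum_single_apply_mem_Icc {f : X → ℝ} (hf : ∀ x, f x ∈ Icc (0:ℝ) 1) (s : Finset X)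
    (x : X) : (∑ y ∈ s, Pi.single y (f y)) x ∈ Icc (0:ℝ) 1 := by
  rw [Finset.sum_apply, Finset.sum_pi_single]
  split_ifs
  exacts [hf x, ⟨le_rfl, zero_le_one⟩]

end PointMass

lemma eq_of_forall_finsum_mul_eq {X : Type*} {p q : X → ℝ}
    (h : ∀ f : X → ℝ, (∀ x, f x ∈ Icc (0:ℝ) 1) → ∑ᶠ x, f x * p x = ∑ᶠ x, f x * q x) :
    p = q := by
  classical
  funext x
  simpa only [finsum_single_one_mul] using h _ (single_one_mem_Icc x)

namespace IsGEModHom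

variable {Y : Type*} [DecidableEq Y] {φ : (Y → ℝ) → ℝ}

lemma map_sum_single (hφ : IsGEModHom φ) {f : Y → ℝ} (hf : ∀ y, f y ∈ Icc (0:ℝ) 1)
    (s : Finset Y) :
    φ (∑ y ∈ s, Pi.single y (f y)) = ∑ y ∈ s, f y * φ (Pi.single y 1) := by
  induction s using Finset.induction_on with
  | empty => simpa using hφ.map_zero
  | insert a s ha ih =>
    have hsingle : Pi.single a (f a) = f a • (Pi.single a 1 : Y → ℝ) := by
      rw [← Pi.single_smul, smul_eq_mul, mul_one]
    rw [Finset.sum_insert ha, Finset.sum_insert ha, hφ.map_add, ← ih, hsingle,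
      hφ.map_smul _ _ (hf a) (single_one_mem_Icc a)]
    · intro x
      simpa only [Finset.sum_singleton] using sum_single_apply_mem_Icc hf {a} x
    · exact sum_single_apply_mem_Icc hf s
    · intro x
      rw [← Pi.add_apply, ← Finset.sum_insert ha (f := fun y => Pi.single y (f y))]
      exact (sum_single_apply_mem_Icc hf _ x).2

lemma eq_sum_mul [Fintype Y] (hφ : IsGEModHom φ) {f : Y → ℝ} (hf : ∀ y, f y ∈ Icc (0:ℝ) 1) :
    φ f = ∑ y, f y * φ (Pi.single y 1) := by
  simpa only [Finset.univ_sum_single] using hφ.map_sum_single hf Finset.univ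

lemma existsUnique_subprob_repr [Fintype Y] (hφ : IsGEModHom φ)
    (hmem : ∀ f : Y → ℝ, (∀ y, f y ∈ Icc (0:ℝ) 1) → φ f ∈ Icc (0:ℝ) 1) :
    ∃! p : Y → ℝ, (∀ y, p y ∈ Icc (0:ℝ) 1) ∧ (∑ y, p y ≤ 1) ∧
      ∀ f : Y → ℝ, (∀ y, f y ∈ Icc (0:ℝ) 1) → φ f = ∑ y, f y * p y := by
  refine ⟨fun y => φ (Pi.single y 1), ⟨fun y => hmem _ (single_one_mem_Icc y), ?_,
    fun f hf => hφ.eq_sum_mul hf⟩, ?_⟩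
  · have hone : ∀ y : Y, (1 : Y → ℝ) y ∈ Icc (0:ℝ) 1 := fun _ => ⟨zero_le_one, le_rfl⟩
    have h := hφ.eq_sum_mul hone
    simp only [Pi.one_apply, one_mul] at h
    exact h ▸ (hmem 1 hone).2
  · rintro q ⟨-, -, hq⟩
    funext y
    rw [hq _ (single_one_mem_Icc y), sum_single_one_mul]

end IsGEModHom

lemma sum_mul_mem_Icc {Y : Type*} [Fintype Y] {p f : Y → ℝ} (hp : ∀ y, 0 ≤ p y)
    (hp_sum : ∑ y, p y ≤ 1) (hf : ∀ y, f y ∈ Icc (0:ℝ) 1) : ∑ y, f y * p y ∈ Icc (0:ℝ) 1 :=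
  ⟨Finset.sum_nonneg fun y _ => mul_nonneg (hf y).1 (hp y),
    (Finset.sum_le_sum fun y _ => mul_le_of_le_one_left (hp y) (hf y).2).trans hp_sum⟩

/-- The total modality `τ_total(p)(f) = ∑_x f(x)·p(x)` for the finitely
supported subdistribution monad: it is injective on subdistributions over any
set `X`, and for a finite set `Y` it is a bijection from subdistributions on
`Y` onto the maps `[0,1]^Y → [0,1]` preserving `0`, partial sums and scalar
multiplication (generalized-effect-module morphisms). -/
theorem stmt_12 :
    -- injectivity for arbitrary X
    (∀ (X : Type) (p q : X → ℝ),
      (∀ x, p x ∈ Icc (0:ℝ) 1) → (Function.support p).Finite → (∑ᶠ x, p x ≤ 1) →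
      (∀ x, q x ∈ Icc (0:ℝ) 1) → (Function.support q).Finite → (∑ᶠ x, q x ≤ 1) →
      (∀ f : X → ℝ, (∀ x, f x ∈ Icc (0:ℝ) 1) →
          ∑ᶠ x, f x * p x = ∑ᶠ x, f x * q x) →
      p = q)
    -- for finite Y : τ_total p is a generalized-effect-module morphism
    ∧ (∀ (Y : Type) [Fintype Y] (p : Y → ℝ),
        (∀ y, p y ∈ Icc (0:ℝ) 1) → (∑ y, p y ≤ 1) →
        ((∀ f : Y → ℝ, (∀ y, f y ∈ Icc (0:ℝ) 1) → (∑ y, f y * p y) ∈ Icc (0:ℝ) 1)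
          ∧ (∑ y, (0:ℝ) * p y) = 0
          ∧ (∀ f g : Y → ℝ, (∀ y, f y ∈ Icc (0:ℝ) 1) → (∀ y, g y ∈ Icc (0:ℝ) 1) →
              (∀ y, f y + g y ≤ 1) →
              ∑ y, (f y + g y) * p y = (∑ y, f y * p y) + ∑ y, g y * p y)
          ∧ (∀ (r : ℝ) (f : Y → ℝ), r ∈ Icc (0:ℝ) 1 → (∀ y, f y ∈ Icc (0:ℝ) 1) →
              ∑ y, (r * f y) * p y = r * ∑ y, f y * p y)))
    -- and every generalized-effect-module morphism φ : [0,1]^Y → [0,1]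
    -- arises from a unique subdistribution p
    ∧ (∀ (Y : Type) [Fintype Y] (φ : (Y → ℝ) → ℝ),
        (∀ f : Y → ℝ, (∀ y, f y ∈ Icc (0:ℝ) 1) → φ f ∈ Icc (0:ℝ) 1) →
        φ 0 = 0 →
        (∀ f g : Y → ℝ, (∀ y, f y ∈ Icc (0:ℝ) 1) → (∀ y, g y ∈ Icc (0:ℝ) 1) →
            (∀ y, f y + g y ≤ 1) → φ (f + g) = φ f + φ g) →
        (∀ (r : ℝ) (f : Y → ℝ), r ∈ Icc (0:ℝ) 1 → (∀ y, f y ∈ Icc (0:ℝ) 1) →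
            φ (r • f) = r * φ f) →
        ∃! p : Y → ℝ,
          (∀ y, p y ∈ Icc (0:ℝ) 1) ∧ (∑ y, p y ≤ 1) ∧
          ∀ f : Y → ℝ, (∀ y, f y ∈ Icc (0:ℝ) 1) → φ f = ∑ y, f y * p y) := by
  classical
  refine ⟨fun X p q _ _ _ _ _ _ h => eq_of_forall_finsum_mul_eq h, ?_, ?_⟩
  · intro Y _ p hp hp_sum
    refine ⟨fun f hf => sum_mul_mem_Icc (fun y => (hp y).1) hp_sum hf, by simp,
      fun f g _ _ _ => by simp only [add_mul, Finset.sum_add_distrib], fun r f _ _ => ?_⟩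
    simp only [Finset.mul_sum, mul_assoc]
  · intro Y _ φ hmem hzero hadd hsmul
    exact IsGEModHom.existsUnique_subprob_repr ⟨hzero, hadd, hsmul⟩ hmem
end

section
/- Let Y be a finite set. A map φ : ([0,1]^Y) → [0,1] is of the form f ↦ ∑_y f(y) p(y) for some probability distribution p on Y (∑ p(y) = 1) if and only if φ preserves 0, 1 (the constant-one function maps to 1), partial sums, and scalar multiplication by elements of [0,1]. -/
/-!
The direct implication is immediate, since `f ↦ ∑ y, f y * p y` is linear and maps the cube
`[0,1]^Y` to `[0,1]` when `p` is a probability vector. Conversely, put `p y := φ (Pi.single y 1)`.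
Every `f` in the cube is the sum of the functions `f y • Pi.single y 1`, whose pointwise sum is
`f ≤ 1`, so iterating partial additivity and then using homogeneity gives
`φ f = ∑ y, f y * p y`; taking `f = 1` shows `∑ y, p y = φ 1 = 1`.
-/

open Set Finset

theorem sum_mul_mem_Icc_of_sum_eq_one {Y : Type*} [Fintype Y] {p f : Y → ℝ}
    (hp : ∀ y, 0 ≤ p y) (hsum : ∑ y, p y = 1) (hf : ∀ y, f y ∈ Icc (0:ℝ) 1) :
    ∑ y, f y * p y ∈ Icc (0:ℝ) 1 := by
  refine ⟨sum_nonneg fun y _ => mul_nonneg (hf y).1 (hp y), ?_⟩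
  calc ∑ y, f y * p y ≤ ∑ y, p y :=
        sum_le_sum fun y _ => mul_le_of_le_one_left (hp y) (hf y).2
    _ = 1 := hsum

theorem Pi.single_one_mem_Icc {Y : Type*} [DecidableEq Y] (y z : Y) :
    (Pi.single y 1 : Y → ℝ) z ∈ Icc (0:ℝ) 1 := by
  rcases eq_or_ne z y with rfl | h <;> simp [*]

section PartialAdditive

variable {ι Y : Type*} {φ : (Y → ℝ) → ℝ}

theorem map_sum_of_map_add_of_sum_le_one (h0 : φ 0 = 0)
    (hadd : ∀ f g : Y → ℝ, (∀ y, f y ∈ Icc (0:ℝ) 1) → (∀ y, g y ∈ Icc (0:ℝ) 1) →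
      (∀ y, f y + g y ≤ 1) → φ (f + g) = φ f + φ g)
    (s : Finset ι) (g : ι → Y → ℝ) (hg : ∀ i y, g i y ∈ Icc (0:ℝ) 1)
    (hle : ∀ y, ∑ i ∈ s, g i y ≤ 1) :
    φ (∑ i ∈ s, g i) = ∑ i ∈ s, φ (g i) := by
  classical
  induction s using Finset.induction_on with
  | empty => simpa using h0
  | insert a s ha ih =>
    simp only [sum_insert ha] at hle ⊢
    have hrest : ∀ y, (∑ i ∈ s, g i) y ∈ Icc (0:ℝ) 1 := fun y => by
      rw [Finset.sum_apply]
      exact ⟨sum_nonneg fun i _ => (hg i y).1, by linarith [hle y, (hg a y).1]⟩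
    rw [hadd _ _ (hg a) hrest fun y => by rw [Finset.sum_apply]; exact hle y,
      ih fun y => by simpa only [Finset.sum_apply] using (hrest y).2]

theorem map_eq_sum_mul_map_single [Fintype Y] [DecidableEq Y] (h0 : φ 0 = 0)
    (hadd : ∀ f g : Y → ℝ, (∀ y, f y ∈ Icc (0:ℝ) 1) → (∀ y, g y ∈ Icc (0:ℝ) 1) →
      (∀ y, f y + g y ≤ 1) → φ (f + g) = φ f + φ g)
    (hsmul : ∀ (r : ℝ) (f : Y → ℝ), r ∈ Icc (0:ℝ) 1 →
      (∀ y, f y ∈ Icc (0:ℝ) 1) → φ (r • f) = r * φ f)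
    (f : Y → ℝ) (hf : ∀ y, f y ∈ Icc (0:ℝ) 1) :
    φ f = ∑ y, f y * φ (Pi.single y 1) := by
  have hdecomp : ∑ y, f y • Pi.single y (1:ℝ) = f := by
    simp only [← Pi.single_smul', smul_eq_mul, mul_one, Finset.univ_sum_single]
  have hpieces : ∀ y z, (f y • (Pi.single y 1 : Y → ℝ)) z ∈ Icc (0:ℝ) 1 := fun y z => by
    rcases eq_or_ne z y with rfl | h <;> simp [*]
  calc φ f = φ (∑ y, f y • Pi.single y (1:ℝ)) := by rw [hdecomp]
    _ = ∑ y, φ (f y • Pi.single y (1:ℝ)) :=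
        map_sum_of_map_add_of_sum_le_one h0 hadd _ _ hpieces fun z => by
          simpa only [← Finset.sum_apply, hdecomp] using (hf z).2
    _ = ∑ y, f y * φ (Pi.single y 1) :=
        sum_congr rfl fun y _ => hsmul _ _ (hf y) (Pi.single_one_mem_Icc y)

end PartialAdditive

/-- Healthiness for the distribution monad on a finite set `Y`: a map
`φ : [0,1]^Y → [0,1]` is of the form `f ↦ ∑_y f(y)·p(y)` for some probability
distribution `p` on `Y` iff `φ` maps into `[0,1]` and preserves `0`, `1`,
partial sums and scalar multiplication by elements of `[0,1]`. -/
theorem stmt_14 (Y : Type) [Fintype Y] (φ : (Y → ℝ) → ℝ) :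
    (∃ p : Y → ℝ, (∀ y, p y ∈ Icc (0:ℝ) 1) ∧ (∑ y, p y = 1) ∧
        ∀ f : Y → ℝ, (∀ y, f y ∈ Icc (0:ℝ) 1) → φ f = ∑ y, f y * p y)
    ↔ ((∀ f : Y → ℝ, (∀ y, f y ∈ Icc (0:ℝ) 1) → φ f ∈ Icc (0:ℝ) 1)
      ∧ φ 0 = 0
      ∧ φ 1 = 1
      ∧ (∀ f g : Y → ℝ, (∀ y, f y ∈ Icc (0:ℝ) 1) → (∀ y, g y ∈ Icc (0:ℝ) 1) →
          (∀ y, f y + g y ≤ 1) → φ (f + g) = φ f + φ g)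
      ∧ (∀ (r : ℝ) (f : Y → ℝ), r ∈ Icc (0:ℝ) 1 →
          (∀ y, f y ∈ Icc (0:ℝ) 1) → φ (r • f) = r * φ f)) := by
  classical
  constructor
  · rintro ⟨p, hp, hsum, hφ⟩
    refine ⟨fun f hf => hφ f hf ▸ sum_mul_mem_Icc_of_sum_eq_one (fun y => (hp y).1) hsum hf,
      by simpa using hφ 0 (by simp), by simpa [hsum] using hφ 1 (by simp), ?_, ?_⟩
    · intro f g hf hg hfg
      rw [hφ f hf, hφ g hg, hφ (f + g) fun y => ⟨add_nonneg (hf y).1 (hg y).1, hfg y⟩,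
        ← sum_add_distrib]
      simp only [Pi.add_apply, add_mul]
    · intro r f hr hf
      rw [hφ f hf, hφ (r • f) fun y => ⟨mul_nonneg hr.1 (hf y).1, mul_le_one₀ hr.2 (hf y).1 (hf y).2⟩,
        mul_sum]
      simp only [Pi.smul_apply, smul_eq_mul, mul_assoc]
  · rintro ⟨hIcc, h0, h1, hadd, hsmul⟩
    have hφ := map_eq_sum_mul_map_single h0 hadd hsmul
    refine ⟨fun y => φ (Pi.single y 1), fun y => hIcc _ (Pi.single_one_mem_Icc y), ?_, hφ⟩
    simpa [h1] using (hφ 1 (by simp)).symm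
end

section
/- For a complete category C with a dualizing-object dual adjunction to D^op and a monad map τ : T → D(Ω^(−), Ω), if τ is a natural isomorphism then the induced predicate-transformer functor P^τ : Kℓ(T) → D^op is full and faithful. In the concrete instance T = 𝒫 (powerset monad on Set) and D = complete join-semilattices with Ω = Prop: the functor Kℓ(𝒫) → (CL_⋁)^op sending X to the complete lattice X → Prop and f : X → 𝒫 Y to the sup-preserving map h ↦ λx. ∃ y ∈ f x, h y is full and faithful. -/
/-! Every predicate `h : Y → Prop` is the join of the singleton predicates `(· = y)` with `h y`,
so a sup-preserving `φ : (Y → Prop) → (X → Prop)` is determined by its values on singletons,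
i.e. by the relation `x ↦ {y | φ (· = y) x}`; and the predicate transformer of a relation
returns that relation back on singletons. -/

section PredTransformer

variable {X Y : Type*}

def predTransformer (f : X → Set Y) (h : Y → Prop) (x : X) : Prop :=
  ∃ y ∈ f x, h y

theorem predTransformer_sSup (f : X → Set Y) (s : Set (Y → Prop)) :
    predTransformer f (sSup s) = sSup (predTransformer f '' s) := by
  funext x
  simp only [predTransformer, sSup_apply, iSup_Prop_eq, Subtype.exists, Set.exists_mem_image,
    exists_prop, eq_iff_iff]
  tauto

def relOfTransformer (φ : (Y → Prop) → (X → Prop)) (x : X) : Set Y :=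
  {y | φ (· = y) x}

theorem leftInverse_relOfTransformer_predTransformer :
    Function.LeftInverse relOfTransformer (predTransformer (X := X) (Y := Y)) := by
  intro f
  funext x
  ext y
  simp [relOfTransformer, predTransformer]

theorem sSup_image_singletonPred (h : Y → Prop) : sSup ((fun y => (· = y)) '' {y | h y}) = h := by
  funext z
  simp [sSup_apply, iSup_Prop_eq]

theorem eq_predTransformer_of_map_sSup {φ : (Y → Prop) → (X → Prop)}
    (hφ : ∀ s : Set (Y → Prop), φ (sSup s) = sSup (φ '' s)) :
    φ = predTransformer (relOfTransformer φ) := by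
  funext h x
  rw [← sSup_image_singletonPred h, hφ, ← Set.image_comp]
  simp [predTransformer, relOfTransformer, sSup_apply, iSup_Prop_eq, and_comm]

end PredTransformer

/-- Healthiness as full-and-faithfulness, concrete instance: the functor
`Kℓ(𝒫) → (CL_⋁)^op` sending `X` to the complete lattice `X → Prop` and a
Kleisli morphism `f : X → 𝒫 Y` to the predicate transformer
`h ↦ λ x, ∃ y ∈ f x, h y` is full and faithful, i.e. for all sets `X`, `Y`
the map `(X → 𝒫 Y) → SupHom((Y → Prop),(X → Prop))` is a bijection onto the
sup-preserving maps. -/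
theorem stmt_15 (X Y : Type) :
    Set.BijOn
      (fun (f : X → Set Y) => fun (h : Y → Prop) (x : X) => ∃ y ∈ f x, h y)
      Set.univ
      {φ : (Y → Prop) → (X → Prop) |
        ∀ s : Set (Y → Prop), φ (sSup s) = sSup (φ '' s)} :=
  ⟨fun f _ => predTransformer_sSup f, leftInverse_relOfTransformer_predTransformer.injective.injOn,
    fun _ hφ => ⟨_, Set.mem_univ _, (eq_predTransformer_of_map_sSup hφ).symm⟩⟩
end

section
/- Let ℒ be the lift (maybe) monad on Set and consider computations f : X → 𝒫₊(Y + 1) where 𝒫₊ denotes nonempty powersets. Define wp(f) : Set Y → Set X by wp(f)(V) = {x | f(x) ⊆ {inl y | y ∈ V}} (every outcome is a non-diverging element of V). Then a function φ : Set Y → Set X arises as wp(f) for some f : X → 𝒫₊(Y+1) if and only if φ(∅) = ∅ and φ preserves all nonempty intersections. -/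
/-!
The weakest precondition of `f` is determined by the sets `f x`, and `inl '' ·` commutes with
nonempty intersections, so `wp f` is positively conjunctive; it is strict because every `f x` is
nonempty. Conversely, positive conjunctivity makes `φ` monotone and gives every `x ∈ φ univ` a
least postcondition `⋂₀ {V | x ∈ φ V}`, nonempty by strictness. The computation returning exactly
that set (and diverging on the states outside `φ univ`) has `φ` as its weakest precondition.
-/

open Set

section WeakestPrecondition

variable {X Y E : Type*}

def wp (f : X → Set (Y ⊕ E)) (V : Set Y) : Set X :=
  {x | f x ⊆ Sum.inl '' V}

theorem wp_empty {f : X → Set (Y ⊕ E)} (hf : ∀ x, (f x).Nonempty) : wp f ∅ = ∅ := by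
  ext x
  simpa [wp] using (hf x).ne_empty

theorem wp_sInter (f : X → Set (Y ⊕ E)) {s : Set (Set Y)} (hs : s.Nonempty) :
    wp f (⋂₀ s) = ⋂ V ∈ s, wp f V := by
  ext x
  simp only [wp, mem_ofPred_eq, mem_iInter, sInter_eq_biInter,
    Sum.inl_injective.injOn.image_biInter_eq hs, subset_iInter_iff]

section Conjunctive

variable {φ : Set Y → Set X}
  (hφ : ∀ s : Set (Set Y), s.Nonempty → φ (⋂₀ s) = ⋂ V ∈ s, φ V)
include hφ

theorem monotone_of_map_sInter : Monotone φ := by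
  intro A B hAB
  have hpair := hφ {A, B} (insert_nonempty A {B})
  rw [sInter_pair, inter_eq_left.mpr hAB] at hpair
  rw [hpair]
  exact biInter_subset_of_mem (by simp)

theorem mem_map_sInter_setOf_mem {x : X} (hx : x ∈ φ univ) : x ∈ φ (⋂₀ {V | x ∈ φ V}) := by
  rw [hφ _ ⟨univ, hx⟩, mem_iInter₂]
  exact fun _ hV => hV

theorem mem_map_iff_sInter_subset {x : X} (hx : x ∈ φ univ) (V : Set Y) :
    x ∈ φ V ↔ ⋂₀ {W | x ∈ φ W} ⊆ V :=
  ⟨fun hV => sInter_subset_of_mem hV,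
    fun hsub => monotone_of_map_sInter hφ hsub (mem_map_sInter_setOf_mem hφ hx)⟩

open Classical in
theorem exists_wp_eq [Nonempty E] (hempty : φ ∅ = ∅) :
    ∃ f : X → Set (Y ⊕ E), (∀ x, (f x).Nonempty) ∧ wp f = φ := by
  refine ⟨fun x => if x ∈ φ univ then Sum.inl '' ⋂₀ {V | x ∈ φ V} else range Sum.inr,
    fun x => ?_, ?_⟩
  · dsimp only
    split_ifs with hx
    · refine Nonempty.image _ (nonempty_iff_ne_empty.mpr fun h => ?_)
      simpa [h, hempty] using mem_map_sInter_setOf_mem hφ hx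
    · exact range_nonempty _
  · ext V x
    by_cases hx : x ∈ φ univ
    · simp only [wp, mem_ofPred_eq, if_pos hx, image_subset_image_iff Sum.inl_injective]
      exact (mem_map_iff_sInter_subset hφ hx V).symm
    · have hxV : x ∉ φ V := fun h => hx (monotone_of_map_sInter hφ (subset_univ V) h)
      simp [wp, hx, hxV, range_subset_iff]

end Conjunctive

end WeakestPrecondition

/-- Dijkstra's healthiness for nondeterminism with divergence: a predicate
transformer `φ : Set Y → Set X` arises as
`wp(f)(V) = {x | f x ⊆ {inl y | y ∈ V}}` for some computation
`f : X → 𝒫₊(Y + 1)` (nonempty powersets of `Y` plus a divergence element)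
iff `φ ∅ = ∅` (strictness) and `φ` preserves all nonempty intersections
(positive conjunctivity). -/
theorem stmt_17 (X Y : Type) (φ : Set Y → Set X) :
    (∃ f : X → {S : Set (Y ⊕ PUnit) // S.Nonempty},
        φ = fun V => {x | (f x).1 ⊆ Sum.inl '' V})
    ↔ (φ ∅ = ∅ ∧
       ∀ s : Set (Set Y), s.Nonempty → φ (⋂₀ s) = ⋂ V ∈ s, φ V) := by
  constructor
  · rintro ⟨f, rfl⟩
    exact ⟨wp_empty (f := fun x => (f x).1) fun x => (f x).2,
      fun s hs => wp_sInter (fun x => (f x).1) hs⟩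
  · rintro ⟨hempty, hconj⟩
    obtain ⟨f, hf, rfl⟩ := exists_wp_eq (E := PUnit) hconj hempty
    exact ⟨fun x => ⟨f x, hf x⟩, rfl⟩
end
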